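/- Let A_1, …, A_m ∈ ℝ^{n×n}, let d ≥ 1 be an integer, and let γ ≥ 0. Suppose there exist a homogeneous polynomial p ∈ ℝ[x_1,…,x_n] of degree 2d, finite sets B^{(0)}_1, …, B^{(0)}_{t_0} ⊆ ℕ^n_d and, for each i = 1,…,m, finite sets B^{(i)}_1, …, B^{(i)}_{t_i} ⊆ ℕ^n_d, together with symmetric positive semidefinite matrices Q^{(0)}_k (rows and columns indexed by B^{(0)}_k) and Q^{(i)}_k (indexed by B^{(i)}_k), such that p(x) − (x_1² + ⋯ + x_n²)^d = Σ_{k=1}^{t_0} (x^{B^{(0)}_k})ᵀ Q^{(0)}_k x^{B^{(0)}_k} and, for each i, γ^{2d} p(x) − p(A_i x) = Σ_{k=1}^{t_i} (x^{B^{(i)}_k})ᵀ Q^{(i)}_k x^{B^{(i)}_k}. Then ρ(𝒜) ≤ γ. -/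

import Mathlib

open MvPolynomial Filter

/-- Operator norm of a real matrix induced by the Euclidean norm on `ℝ^n`. -/
noncomputable def opNorm {n : ℕ} (A : Matrix (Fin n) (Fin n) ℝ) : ℝ :=
  ‖LinearMap.toContinuousLinearMap (Matrix.toEuclideanLin A)‖

/-- Joint spectral radius of a family of matrices. -/
noncomputable def jsr {n m : ℕ} (A : Fin m → Matrix (Fin n) (Fin n) ℝ) : ℝ :=
  Filter.limsup
    (fun k : ℕ => ⨆ σ : Fin k → Fin m,
      opNorm ((List.ofFn fun j => A (σ j)).prod) ^ (1 / (k : ℝ)))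
    Filter.atTop

/-- The polynomial `p(Ax)`, obtained by substituting the linear forms `(Ax)_i` for `x_i`. -/
noncomputable def polyComp {n : ℕ} (p : MvPolynomial (Fin n) ℝ)
    (A : Matrix (Fin n) (Fin n) ℝ) : MvPolynomial (Fin n) ℝ :=
  MvPolynomial.aeval (fun i => ∑ j, MvPolynomial.C (A i j) * MvPolynomial.X j) p

/-- The polynomial `(x^B)ᵀ Q x^B = Σ_{β,γ ∈ B} Q_{βγ} x^{β+γ}` for a finite set `B` of
exponent vectors and a matrix `Q` indexed by `B`. -/
noncomputable def gramPoly {n : ℕ} (B : Finset (Fin n →₀ ℕ)) (Q : Matrix ↥B ↥B ℝ) :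
    MvPolynomial (Fin n) ℝ :=
  ∑ u : ↥B, ∑ v : ↥B, MvPolynomial.monomial (u.1 + v.1) (Q u v)

/-! Evaluating the certificates pointwise (a PSD Gram form is nonnegative) gives
`‖x‖^{2d} ≤ p(x)` and `p(Aᵢx) ≤ γ^{2d} p(x)`, while homogeneity gives `p(x) ≤ C ‖x‖^{2d}`.
So `p` is a Lyapunov function: along a product `A_σ` of length `k`,
`‖A_σ x‖^{2d} ≤ p(A_σ x) ≤ γ^{2dk} C ‖x‖^{2d}`, hence `‖A_σ‖ ≤ C^{1/2d} γ^k`,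
and the `k`-th roots of these bounds tend to `γ`. -/

open WithLp
open scoped Matrix Topology

section GramCertificates

variable {n : ℕ}

lemma eval_gramPoly_nonneg {B : Finset (Fin n →₀ ℕ)} {Q : Matrix ↥B ↥B ℝ} (hQ : Q.PosSemidef)
    (x : Fin n → ℝ) : 0 ≤ eval x (gramPoly B Q) := by
  classical
  refine (hQ.dotProduct_mulVec_nonneg fun u : ↥B => u.1.prod fun i e => x i ^ e).trans_eq ?_
  simp only [gramPoly, map_sum, eval_monomial, dotProduct, Matrix.mulVec, Finset.mul_sum,
    star_trivial]
  refine Finset.sum_congr rfl fun u _ => Finset.sum_congr rfl fun v _ => ?_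
  rw [Finsupp.prod_add_index (fun i _ => pow_zero (x i)) (fun i _ e₁ e₂ => pow_add (x i) e₁ e₂)]
  ring

lemma eval_le_of_sub_eq_sum_gramPoly {ι : Type*} [Fintype ι] {p q : MvPolynomial (Fin n) ℝ}
    {B : ι → Finset (Fin n →₀ ℕ)} {Q : (k : ι) → Matrix ↥(B k) ↥(B k) ℝ}
    (hQ : ∀ k, (Q k).PosSemidef) (h : p - q = ∑ k, gramPoly (B k) (Q k)) (x : Fin n → ℝ) :
    eval x q ≤ eval x p := by
  have hsum := congrArg (eval x) h
  rw [map_sub, map_sum] at hsum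
  linarith [Finset.sum_nonneg fun k (_ : k ∈ Finset.univ) => eval_gramPoly_nonneg (hQ k) x]

lemma eval_polyComp (p : MvPolynomial (Fin n) ℝ) (M : Matrix (Fin n) (Fin n) ℝ)
    (x : Fin n → ℝ) : eval x (polyComp p M) = eval (M *ᵥ x) p := by
  change aeval x (aeval _ p) = aeval (M *ᵥ x) p
  rw [comp_aeval_apply]
  congr
  funext i
  simp [Matrix.mulVec, dotProduct]

end GramCertificates

section EuclideanBounds

variable {ι : Type*} [Fintype ι]

lemma eval_sum_X_sq (x : EuclideanSpace ℝ ι) : eval (ofLp x) (∑ j, X j ^ 2) = ‖x‖ ^ 2 := by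
  simp [EuclideanSpace.real_norm_sq_eq]

lemma MvPolynomial.IsHomogeneous.abs_eval_le {p : MvPolynomial ι ℝ} {k : ℕ}
    (hp : p.IsHomogeneous k) (x : EuclideanSpace ℝ ι) :
    |eval (ofLp x) p| ≤ (∑ α ∈ p.support, |p.coeff α|) * ‖x‖ ^ k := by
  rw [eval_eq, Finset.sum_mul]
  refine (Finset.abs_sum_le_sum_abs _ _).trans (Finset.sum_le_sum fun α hα => ?_)
  rw [abs_mul, Finset.abs_prod, hp.degree_eq_sum_deg_support hα, ← Finset.prod_pow_eq_pow_sum]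
  gcongr with i
  rw [abs_pow]
  exact pow_le_pow_left₀ (abs_nonneg _) (PiLp.norm_apply_le x i) _

end EuclideanBounds

lemma opNorm_nonneg {n : ℕ} (M : Matrix (Fin n) (Fin n) ℝ) : 0 ≤ opNorm M := norm_nonneg _

section Lyapunov

variable {n : ℕ} (V : EuclideanSpace ℝ (Fin n) → ℝ)

lemma apply_toEuclideanLin_list_prod_le {c : ℝ} (hc : 0 ≤ c) (L : List (Matrix (Fin n) (Fin n) ℝ))
    (hL : ∀ M ∈ L, ∀ x, V (M.toEuclideanLin x) ≤ c * V x) (x : EuclideanSpace ℝ (Fin n)) :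
    V (L.prod.toEuclideanLin x) ≤ c ^ L.length * V x := by
  induction L generalizing x with
  | nil => simp
  | cons M L ih =>
    calc V ((M :: L).prod.toEuclideanLin x) = V (M.toEuclideanLin (L.prod.toEuclideanLin x)) := by
          rw [List.prod_cons, Matrix.toLpLin_mul_same, LinearMap.comp_apply]
      _ ≤ c * V (L.prod.toEuclideanLin x) := hL M (by simp) _
      _ ≤ c * (c ^ L.length * V x) :=
          mul_le_mul_of_nonneg_left (ih (fun M hM => hL M (by simp [hM])) x) hc
      _ = c ^ (M :: L).length * V x := by rw [List.length_cons, pow_succ]; ring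

lemma opNorm_list_prod_le_of_lyapunov {N : ℕ} (hN : N ≠ 0) {C c : ℝ} (hC : 0 ≤ C) (hc : 0 ≤ c)
    (hlow : ∀ x, ‖x‖ ^ N ≤ V x) (hup : ∀ x, V x ≤ C * ‖x‖ ^ N)
    (L : List (Matrix (Fin n) (Fin n) ℝ))
    (hL : ∀ M ∈ L, ∀ x, V (M.toEuclideanLin x) ≤ c ^ N * V x) :
    opNorm L.prod ≤ C ^ (N⁻¹ : ℝ) * c ^ L.length := by
  have hK : 0 ≤ C ^ (N⁻¹ : ℝ) * c ^ L.length := by positivity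
  refine ContinuousLinearMap.opNorm_le_bound _ hK fun x => ?_
  rw [← pow_le_pow_iff_left₀ (norm_nonneg _) (by positivity) hN]
  calc ‖L.prod.toEuclideanLin x‖ ^ N ≤ V (L.prod.toEuclideanLin x) := hlow _
    _ ≤ (c ^ N) ^ L.length * V x := apply_toEuclideanLin_list_prod_le V (by positivity) L hL x
    _ ≤ (c ^ N) ^ L.length * (C * ‖x‖ ^ N) := by gcongr; exact hup x
    _ = (C ^ (N⁻¹ : ℝ) * c ^ L.length * ‖x‖) ^ N := by
        rw [mul_pow, mul_pow, Real.rpow_inv_natCast_pow hC hN, ← pow_mul, ← pow_mul, mul_comm N]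
        ring

end Lyapunov

lemma jsr_le_of_opNorm_prod_le {n m : ℕ} (A : Fin m → Matrix (Fin n) (Fin n) ℝ) {γ K : ℝ}
    (hγ : 0 ≤ γ)
    (h : ∀ k (σ : Fin k → Fin m), opNorm (List.ofFn fun j => A (σ j)).prod ≤ K * γ ^ k) :
    jsr A ≤ γ := by
  set K' := max K 1
  have hK' : 0 < K' := lt_max_of_lt_right one_pos
  have hbound : ∀ k, 1 ≤ k → (⨆ σ : Fin k → Fin m,
      opNorm ((List.ofFn fun j => A (σ j)).prod) ^ (1 / (k : ℝ))) ≤ K' ^ (1 / (k : ℝ)) * γ := by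
    intro k hk
    refine Real.iSup_le (fun σ => ?_) (by positivity)
    calc opNorm ((List.ofFn fun j => A (σ j)).prod) ^ (1 / (k : ℝ))
        ≤ (K' * γ ^ k) ^ (1 / (k : ℝ)) := by
          gcongr
          · exact opNorm_nonneg _
          · exact (h k σ).trans (by gcongr; exact le_max_left _ _)
      _ = K' ^ (1 / (k : ℝ)) * γ := by
          rw [Real.mul_rpow hK'.le (by positivity), one_div,
            Real.pow_rpow_inv_natCast hγ (by omega)]
  have htend : Tendsto (fun k : ℕ => K' ^ (1 / (k : ℝ)) * γ) atTop (𝓝 γ) := by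
    simpa using ((Real.continuousAt_const_rpow hK'.ne').tendsto.comp
      tendsto_one_div_atTop_nhds_zero_nat).mul_const γ
  calc jsr A ≤ limsup (fun k : ℕ => K' ^ (1 / (k : ℝ)) * γ) atTop :=
        limsup_le_limsup ((eventually_ge_atTop 1).mono hbound)
          (isCoboundedUnder_le_of_le atTop fun k =>
            Real.iSup_nonneg fun σ => Real.rpow_nonneg (opNorm_nonneg _) _)
          htend.isBoundedUnder_le
    _ = γ := htend.limsup_eq

theorem stmt4_general {n m : ℕ} (A : Fin m → Matrix (Fin n) (Fin n) ℝ) (d : ℕ) (hd : 1 ≤ d)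
    (γ : ℝ) (hγ : 0 ≤ γ)
    (p : MvPolynomial (Fin n) ℝ) (hp : p.IsHomogeneous (2 * d))
    (t0 : ℕ) (B0 : Fin t0 → Finset (Fin n →₀ ℕ))
    (ti : Fin m → ℕ) (Bi : (i : Fin m) → Fin (ti i) → Finset (Fin n →₀ ℕ))
    (Q0 : (k : Fin t0) → Matrix ↥(B0 k) ↥(B0 k) ℝ)
    (hQ0 : ∀ k, (Q0 k).PosSemidef)
    (Qi : (i : Fin m) → (k : Fin (ti i)) → Matrix ↥(Bi i k) ↥(Bi i k) ℝ)
    (hQi : ∀ i k, (Qi i k).PosSemidef)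
    (heq0 : p - (∑ j, MvPolynomial.X j ^ 2) ^ d = ∑ k, gramPoly (B0 k) (Q0 k))
    (heqi : ∀ i, γ ^ (2 * d) • p - polyComp p (A i) = ∑ k, gramPoly (Bi i k) (Qi i k)) :
    jsr A ≤ γ := by
  set V : EuclideanSpace ℝ (Fin n) → ℝ := fun x => eval (ofLp x) p
  have hlow (x : EuclideanSpace ℝ (Fin n)) : ‖x‖ ^ (2 * d) ≤ V x := by
    have h := eval_le_of_sub_eq_sum_gramPoly hQ0 heq0 (ofLp x)
    rwa [map_pow, eval_sum_X_sq, ← pow_mul] at h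
  have hup (x : EuclideanSpace ℝ (Fin n)) : V x ≤ (∑ α ∈ p.support, |p.coeff α|) * ‖x‖ ^ (2 * d) :=
    (le_abs_self _).trans (hp.abs_eval_le x)
  have hstep (i : Fin m) (x : EuclideanSpace ℝ (Fin n)) :
      V ((A i).toEuclideanLin x) ≤ γ ^ (2 * d) * V x := by
    simpa [V, eval_polyComp, smul_eval] using
      eval_le_of_sub_eq_sum_gramPoly (hQi i) (heqi i) (ofLp x)
  refine jsr_le_of_opNorm_prod_le A (K := (∑ α ∈ p.support, |p.coeff α|) ^ ((2 * d : ℕ)⁻¹ : ℝ))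
    hγ fun k σ => ?_
  simpa using opNorm_list_prod_le_of_lyapunov V (by omega) (by positivity) hγ hlow hup
    (List.ofFn fun j => A (σ j)) (by simpa [List.mem_ofFn] using fun j => hstep (σ j))

/-- Sparse SOS certificates (sums of clique-indexed PSD Gram forms) for
`p(x) - ‖x‖₂^{2d}` and `γ^{2d} p(x) - p(Aᵢx)` certify `ρ(𝒜) ≤ γ`. -/
theorem stmt4 {n m : ℕ} (A : Fin m → Matrix (Fin n) (Fin n) ℝ) (d : ℕ) (hd : 1 ≤ d)
    (γ : ℝ) (hγ : 0 ≤ γ)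
    (p : MvPolynomial (Fin n) ℝ) (hp : p.IsHomogeneous (2 * d))
    (t0 : ℕ) (B0 : Fin t0 → Finset (Fin n →₀ ℕ))
    (hB0 : ∀ (k : Fin t0), ∀ α ∈ B0 k, (∑ j, α j) = d)
    (ti : Fin m → ℕ) (Bi : (i : Fin m) → Fin (ti i) → Finset (Fin n →₀ ℕ))
    (hBi : ∀ (i : Fin m) (k : Fin (ti i)), ∀ α ∈ Bi i k, (∑ j, α j) = d)
    (Q0 : (k : Fin t0) → Matrix ↥(B0 k) ↥(B0 k) ℝ)
    (hQ0 : ∀ k, (Q0 k).PosSemidef)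
    (Qi : (i : Fin m) → (k : Fin (ti i)) → Matrix ↥(Bi i k) ↥(Bi i k) ℝ)
    (hQi : ∀ i k, (Qi i k).PosSemidef)
    (heq0 : p - (∑ j, MvPolynomial.X j ^ 2) ^ d = ∑ k, gramPoly (B0 k) (Q0 k))
    (heqi : ∀ i, γ ^ (2 * d) • p - polyComp p (A i) = ∑ k, gramPoly (Bi i k) (Qi i k)) :
    jsr A ≤ γ :=
  stmt4_general A d hd γ hγ p hp t0 B0 ti Bi Q0 hQ0 Qi hQi heq0 heqi
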